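/- For every integer n ≥ 1, the total number of fixed points over all restricted growth sequences of length n satisfies, as an identity of rational numbers, Σ_{π ∈ R_n} F_π = Σ_{i=1}^{n} Σ_{j=1}^{i} Σ_{ℓ=j}^{i} (−1)^{i−ℓ} · ℓ^{n−j} / ((ℓ−j)! · (i−ℓ)!). Equivalently, the average number of fixed points of a uniformly random RGS of length n is (1/B_n) times the right-hand side, where B_n = |R_n|. -/

import Mathlib

open Finset
open scoped Classical

/-- `π : Fin n → ℕ` is a restricted growth sequence (entries are positive, the first entry
is `1`, and each entry exceeds the maximum of the previous entries by at most `1`;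
equivalently `π₁ = 1` and `π_{j+1} ≤ 1 + max {π₁, …, π_j}`). -/
def IsRGS {n : ℕ} (π : Fin n → ℕ) : Prop :=
  ∀ i : Fin n, 1 ≤ π i ∧ π i ≤ (Finset.univ.filter (fun j : Fin n => j < i)).sup π + 1

/-- The (finite) set `R_n` of restricted growth sequences of length `n`
(all such sequences take values in `{1, …, n}`). -/
noncomputable def RGS (n : ℕ) : Finset (Fin n → ℕ) :=
  (Fintype.piFinset fun _ : Fin n => Finset.Icc 1 n).filter IsRGS

/-- The (finite) set `R_{n,k}` of restricted growth sequences of length `n`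
with maximal letter `k`. -/
noncomputable def RGSk (n k : ℕ) : Finset (Fin n → ℕ) :=
  (RGS n).filter (fun π => Finset.univ.sup π = k)

/-- `F_π`: the number of fixed points of `π`, i.e. (1-indexed) positions `i` with `π_i = i`. -/
def fixCount {n : ℕ} (π : Fin n → ℕ) : ℕ :=
  (Finset.univ.filter (fun i : Fin n => π i = (i : ℕ) + 1)).card

/-! Auxiliary development -/

def RGSpre (j : ℕ) {n : ℕ} (π : Fin n → ℕ) : Prop :=
  ∀ m : Fin n, (m : ℕ) < j → π m = (m : ℕ) + 1

noncomputable def Pc (n i j : ℕ) : ℕ := ((RGSk n i).filter (RGSpre j)).card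

noncomputable def gq (n i j : ℕ) : ℚ :=
  ∑ ℓ ∈ Finset.Icc j i,
    (-1 : ℚ) ^ (i - ℓ) * (ℓ : ℚ) ^ (n - j)
      / (((ℓ - j).factorial : ℚ) * ((i - ℓ).factorial : ℚ))

lemma isRGS_val_le {n : ℕ} {π : Fin n → ℕ} (h : IsRGS π) : ∀ j : Fin n, π j ≤ (j : ℕ) + 1 := by
  suffices H : ∀ N : ℕ, ∀ j : Fin n, (j : ℕ) = N → π j ≤ (j : ℕ) + 1 by
    intro j; exact H _ j rfl
  intro N
  induction N using Nat.strong_induction_on with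
  | _ m ih =>
    intro j hj
    subst hj
    have h2 := (h j).2
    have hsup : (univ.filter (fun k : Fin n => k < j)).sup π ≤ (j : ℕ) := by
      apply Finset.sup_le
      intro k hk
      simp only [mem_filter, mem_univ, true_and] at hk
      have hk' : (k : ℕ) < (j : ℕ) := hk
      have := ih (k : ℕ) hk' k rfl
      omega
    omega

lemma isRGS_sup_le {n : ℕ} {π : Fin n → ℕ} (h : IsRGS π) : Finset.univ.sup π ≤ n := by
  apply Finset.sup_le
  intro k _
  have := isRGS_val_le h k
  have := k.isLt
  omega

lemma mem_RGS_iff {n : ℕ} {π : Fin n → ℕ} : π ∈ RGS n ↔ IsRGS π := by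
  constructor
  · intro h; exact (Finset.mem_filter.mp h).2
  · intro h
    refine Finset.mem_filter.mpr ⟨?_, h⟩
    rw [Fintype.mem_piFinset]
    intro i
    rw [Finset.mem_Icc]
    have h1 := (h i).1
    have h2 := isRGS_val_le h i
    have := i.isLt
    omega

lemma isRGS_fix_prefix {n : ℕ} {π : Fin n → ℕ} (h : IsRGS π) :
    ∀ i : Fin n, π i = (i : ℕ) + 1 → ∀ m : Fin n, (m : ℕ) ≤ (i : ℕ) → π m = (m : ℕ) + 1 := by
  suffices H : ∀ N : ℕ, ∀ i : Fin n, (i : ℕ) = N → π i = (i : ℕ) + 1 →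
      ∀ m : Fin n, (m : ℕ) ≤ (i : ℕ) → π m = (m : ℕ) + 1 by
    intro i; exact H _ i rfl
  intro N
  induction N using Nat.strong_induction_on with
  | _ N ih =>
    intro i hi hfix m hm
    subst hi
    rcases Nat.eq_zero_or_pos (i : ℕ) with h0 | hpos
    · have : m = i := Fin.ext (by omega)
      subst this; exact hfix
    · rcases Nat.lt_or_ge (m : ℕ) (i : ℕ) with hlt | hge
      · -- find previous fixed point at i - 1
        have hne : (univ.filter (fun k : Fin n => k < i)).Nonempty := by
          refine ⟨⟨0, lt_of_le_of_lt (Nat.zero_le _) i.isLt⟩, ?_⟩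
          simp only [mem_filter, mem_univ, true_and]
          exact Fin.lt_def.mpr (by simpa using hpos)
        obtain ⟨k, hk, hsupk⟩ := Finset.exists_mem_eq_sup _ hne π
        simp only [mem_filter, mem_univ, true_and] at hk
        have hk' : (k : ℕ) < (i : ℕ) := hk
        have hsup_le : (univ.filter (fun j : Fin n => j < i)).sup π ≤ (i : ℕ) := by
          apply Finset.sup_le
          intro x hx
          simp only [mem_filter, mem_univ, true_and] at hx
          have := isRGS_val_le h x
          have : π x ≤ (x : ℕ) + 1 := this
          have hxk : (x : ℕ) < (i : ℕ) := hx
          omega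
        have h2 := (h i).2
        have hπk : π k = (i : ℕ) := by omega
        have hkval : (k : ℕ) + 1 = (i : ℕ) := by
          have := isRGS_val_le h k
          omega
        have hkfix : π k = (k : ℕ) + 1 := by omega
        have := ih (k : ℕ) hk' k rfl hkfix m (by omega)
        exact this
      · have : m = i := Fin.ext (by omega)
        subst this; exact hfix

example : True := trivial

lemma filter_lt_eq_Iio {n : ℕ} (i : Fin n) :
    univ.filter (fun j : Fin n => j < i) = Finset.Iio i := by
  ext j; simp

lemma univ_fin_succ_eq (n : ℕ) :
    (Finset.univ : Finset (Fin (n+1))) = insert (Fin.last n) (Finset.univ.map Fin.castSuccEmb) := by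
  ext j
  rcases Fin.eq_castSucc_or_eq_last j with ⟨k, rfl⟩ | rfl
  · simp only [mem_univ, Finset.mem_insert, mem_map, true_iff]
    exact Or.inr ⟨k, by simp, rfl⟩
  · simp

lemma sup_snoc_castSucc {n : ℕ} (τ : Fin n → ℕ) (a : ℕ) (i : Fin n) :
    (univ.filter (fun j : Fin (n+1) => j < i.castSucc)).sup (Fin.snoc τ a) =
    (univ.filter (fun j : Fin n => j < i)).sup τ := by
  rw [filter_lt_eq_Iio, filter_lt_eq_Iio, Fin.Iio_castSucc, Finset.sup_map]
  exact Finset.sup_congr rfl (fun k _ => by simpa using Fin.snoc_castSucc (α := fun _ => ℕ) a τ k)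

lemma sup_snoc_last {n : ℕ} (τ : Fin n → ℕ) (a : ℕ) :
    (univ.filter (fun j : Fin (n+1) => j < Fin.last n)).sup (Fin.snoc τ a) =
    Finset.univ.sup τ := by
  rw [filter_lt_eq_Iio, Fin.Iio_last_eq_map, Finset.sup_map]
  exact Finset.sup_congr rfl (fun k _ => by simpa using Fin.snoc_castSucc (α := fun _ => ℕ) a τ k)

lemma sup_univ_snoc {n : ℕ} (τ : Fin n → ℕ) (a : ℕ) :
    Finset.univ.sup (Fin.snoc τ a) = max (Finset.univ.sup τ) a := by
  rw [univ_fin_succ_eq, Finset.sup_insert, Finset.sup_map]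
  have h1 : (Fin.snoc τ a : Fin (n+1) → ℕ) (Fin.last n) = a := by simp
  have h2 : Finset.univ.sup ((Fin.snoc τ a : Fin (n+1) → ℕ) ∘ Fin.castSuccEmb) =
      Finset.univ.sup τ := Finset.sup_congr rfl (fun k _ => by simpa using Fin.snoc_castSucc (α := fun _ => ℕ) a τ k)
  rw [h1, h2]
  exact max_comm _ _

lemma isRGS_snoc_iff {n : ℕ} (τ : Fin n → ℕ) (a : ℕ) :
    IsRGS (Fin.snoc τ a) ↔ IsRGS τ ∧ 1 ≤ a ∧ a ≤ Finset.univ.sup τ + 1 := by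
  constructor
  · intro h
    refine ⟨?_, ?_, ?_⟩
    · intro i
      have := h i.castSucc
      rw [Fin.snoc_castSucc, sup_snoc_castSucc] at this
      exact this
    · have := (h (Fin.last n)).1
      rwa [Fin.snoc_last] at this
    · have := (h (Fin.last n)).2
      rwa [Fin.snoc_last, sup_snoc_last] at this
  · rintro ⟨h1, h2, h3⟩ i
    induction i using Fin.lastCases with
    | last => rw [Fin.snoc_last, sup_snoc_last]; exact ⟨h2, h3⟩
    | cast i => rw [Fin.snoc_castSucc, sup_snoc_castSucc]; exact h1 i

lemma pre_snoc_iff {n : ℕ} (τ : Fin n → ℕ) (a : ℕ) {j : ℕ} (hjn : j ≤ n) :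
    RGSpre j (Fin.snoc τ a) ↔ RGSpre j τ := by
  constructor
  · intro h m hm
    have := h m.castSucc (by simpa using hm)
    rwa [Fin.snoc_castSucc] at this
  · intro h m hm
    have hmn : (m : ℕ) < n := lt_of_lt_of_le hm hjn
    have hme : m = Fin.castSucc ⟨(m : ℕ), hmn⟩ := Fin.ext rfl
    rw [hme, Fin.snoc_castSucc]
    exact h ⟨(m : ℕ), hmn⟩ hm

lemma snoc_injective {n : ℕ} :
    Function.Injective (fun p : (Fin n → ℕ) × ℕ => Fin.snoc p.1 p.2 : _ → Fin (n+1) → ℕ) := by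
  rintro ⟨τ, a⟩ ⟨τ', a'⟩ h
  simp only at h
  have ha : a = a' := by
    have := congrFun h (Fin.last n)
    simpa [Fin.snoc_last] using this
  have hτ : τ = τ' := by
    funext k
    have := congrFun h k.castSucc
    simpa [Fin.snoc_castSucc] using this
  exact Prod.ext hτ ha

lemma mem_RGSk_iff {n k : ℕ} {π : Fin n → ℕ} :
    π ∈ RGSk n k ↔ IsRGS π ∧ Finset.univ.sup π = k := by
  unfold RGSk
  rw [Finset.mem_filter, mem_RGS_iff]

lemma Pc_succ {n i j : ℕ} (hi : 1 ≤ i) (hjn : j ≤ n) :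
    Pc (n+1) i j = i * Pc n i j + Pc n (i-1) j := by
  classical
  set e : (Fin n → ℕ) × ℕ → (Fin (n+1) → ℕ) := fun p => Fin.snoc p.1 p.2 with he
  set Q1 : Finset ((Fin n → ℕ) × ℕ) := ((RGSk n i).filter (RGSpre j)) ×ˢ Finset.Icc 1 i with hQ1
  set Q2 : Finset ((Fin n → ℕ) × ℕ) := ((RGSk n (i-1)).filter (RGSpre j)) ×ˢ {i} with hQ2
  have hset : (RGSk (n+1) i).filter (RGSpre j) = (Q1 ∪ Q2).image e := by
    ext π
    constructor
    · intro hπ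
      rw [Finset.mem_filter] at hπ
      obtain ⟨hπ1, hpre⟩ := hπ
      rw [mem_RGSk_iff] at hπ1
      obtain ⟨hrgs, hsup⟩ := hπ1
      have hπeq : π = Fin.snoc (Fin.init π) (π (Fin.last n)) := (Fin.snoc_init_self π).symm
      set τ := Fin.init π with hτ
      set a := π (Fin.last n) with ha
      rw [hπeq] at hrgs hsup hpre
      rw [isRGS_snoc_iff] at hrgs
      obtain ⟨hτr, ha1, ha2⟩ := hrgs
      rw [sup_univ_snoc] at hsup
      rw [pre_snoc_iff _ _ hjn] at hpre
      rw [Finset.mem_image]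
      by_cases hcase : Finset.univ.sup τ = i
      · refine ⟨(τ, a), ?_, hπeq.symm⟩
        apply Finset.mem_union_left
        rw [hQ1, Finset.mem_product]
        refine ⟨Finset.mem_filter.mpr ⟨mem_RGSk_iff.mpr ⟨hτr, hcase⟩, hpre⟩, ?_⟩
        rw [Finset.mem_Icc]
        omega
      · refine ⟨(τ, a), ?_, hπeq.symm⟩
        apply Finset.mem_union_right
        rw [hQ2, Finset.mem_product]
        have hsuplt : Finset.univ.sup τ < i := by omega
        have hai : a = i := by omega
        have hsupτ : Finset.univ.sup τ = i - 1 := by omega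
        refine ⟨Finset.mem_filter.mpr ⟨mem_RGSk_iff.mpr ⟨hτr, hsupτ⟩, hpre⟩, ?_⟩
        simp [hai]
    · intro hπ
      rw [Finset.mem_image] at hπ
      obtain ⟨⟨τ, a⟩, hmem, hπeq⟩ := hπ
      subst hπeq
      rw [Finset.mem_union] at hmem
      rw [Finset.mem_filter, mem_RGSk_iff, isRGS_snoc_iff, sup_univ_snoc,
        pre_snoc_iff _ _ hjn]
      rcases hmem with hm | hm
      · rw [hQ1, Finset.mem_product, Finset.mem_filter, mem_RGSk_iff, Finset.mem_Icc] at hm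
        obtain ⟨⟨⟨hτr, hsupτ⟩, hpre⟩, ha1, ha2⟩ := hm
        exact ⟨⟨⟨hτr, ha1, by omega⟩, by omega⟩, hpre⟩
      · rw [hQ2, Finset.mem_product, Finset.mem_filter, mem_RGSk_iff, Finset.mem_singleton] at hm
        obtain ⟨⟨⟨hτr, hsupτ⟩, hpre⟩, ha⟩ := hm
        exact ⟨⟨⟨hτr, by omega, by omega⟩, by omega⟩, hpre⟩
  have hdisj : Disjoint Q1 Q2 := by
    rw [Finset.disjoint_left]
    rintro ⟨τ, a⟩ h1 h2
    rw [hQ1, Finset.mem_product, Finset.mem_filter, mem_RGSk_iff] at h1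
    rw [hQ2, Finset.mem_product, Finset.mem_filter, mem_RGSk_iff] at h2
    have := h1.1.1.2
    have := h2.1.1.2
    omega
  unfold Pc
  rw [hset, Finset.card_image_of_injective _ snoc_injective,
    Finset.card_union_of_disjoint hdisj, hQ1, hQ2, Finset.card_product, Finset.card_product]
  simp [Nat.card_Icc]
  ring

lemma Pc_base {i j : ℕ} (hj : 1 ≤ j) : Pc j i j = if i = j then 1 else 0 := by
  classical
  set idf : Fin j → ℕ := fun m => (m : ℕ) + 1 with hidf
  have hrgs : IsRGS idf := by
    intro m
    refine ⟨Nat.le_add_left 1 _, ?_⟩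
    rcases Nat.eq_zero_or_pos (m : ℕ) with h0 | hpos
    · simp [hidf, h0]
    · have hk : (⟨(m : ℕ) - 1, by omega⟩ : Fin j) ∈ univ.filter (fun k : Fin j => k < m) := by
        simp only [mem_filter, mem_univ, true_and]
        exact Fin.lt_def.mpr (by simp; omega)
      have := Finset.le_sup (f := idf) hk
      simp only [hidf] at this ⊢
      omega
  have hsup : Finset.univ.sup idf = j := by
    apply le_antisymm
    · apply Finset.sup_le
      intro m _
      have := m.isLt
      simp only [hidf]
      omega
    · set m0 : Fin j := ⟨j - 1, by omega⟩ with hm0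
      have h2 : idf m0 = j := by
        simp only [hidf]
        show j - 1 + 1 = j
        omega
      have h3 := Finset.le_sup (f := idf) (mem_univ m0)
      rw [h2] at h3
      exact h3
  have hset : (RGSk j i).filter (RGSpre j) = if i = j then {idf} else ∅ := by
    ext π
    rw [Finset.mem_filter, mem_RGSk_iff]
    constructor
    · rintro ⟨⟨hr, hs⟩, hp⟩
      have hπ : π = idf := by
        funext m
        exact hp m m.isLt
      rw [hπ] at hs
      rw [hsup] at hs
      simp [hs.symm, hπ]
    · intro hπ
      by_cases hij : i = j
      · rw [if_pos hij, Finset.mem_singleton] at hπ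
        subst hπ
        exact ⟨⟨hrgs, by rw [hsup, hij]⟩, fun m _ => rfl⟩
      · rw [if_neg hij] at hπ
        exact absurd hπ (Finset.notMem_empty _)
  unfold Pc
  rw [hset]
  split <;> simp

lemma Pc_zero_of_lt {n i j : ℕ} (hj : 1 ≤ j) (hjn : j ≤ n) (hij : i < j) : Pc n i j = 0 := by
  classical
  unfold Pc
  rw [Finset.card_eq_zero, Finset.eq_empty_iff_forall_notMem]
  intro π hπ
  rw [Finset.mem_filter, mem_RGSk_iff] at hπ
  obtain ⟨⟨hr, hs⟩, hp⟩ := hπ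
  set m0 : Fin n := ⟨j - 1, by omega⟩ with hm0
  have hval := hp m0 (by show j - 1 < j; omega)
  have h3 := Finset.le_sup (f := π) (mem_univ m0)
  rw [hval, hs] at h3
  have hv : (m0 : ℕ) = j - 1 := rfl
  omega

lemma gq_zero_of_lt {n i j : ℕ} (hij : i < j) : gq n i j = 0 := by
  unfold gq
  rw [Finset.Icc_eq_empty (by omega), Finset.sum_empty]

lemma gq_base (i j : ℕ) : gq j i j = if i = j then 1 else 0 := by
  rcases Nat.lt_or_ge i j with hij | hij
  · rw [gq_zero_of_lt hij, if_neg (by omega)]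
  · set m := i - j with hm
    have hkey : (m.factorial : ℚ) * gq j i j = if m = 0 then 1 else 0 := by
      unfold gq
      rw [Finset.mul_sum]
      rw [← Finset.Ico_add_one_right_eq_Icc, Finset.sum_Ico_eq_sum_range]
      have hrange : i + 1 - j = m + 1 := by omega
      rw [hrange]
      have hterm : ∀ t ∈ Finset.range (m + 1),
          (m.factorial : ℚ) * ((-1 : ℚ) ^ (i - (j + t)) * ((j + t : ℕ) : ℚ) ^ (j - j)
            / ((((j + t) - j).factorial : ℚ) * ((i - (j + t)).factorial : ℚ)))
          = (-1 : ℚ) ^ (m - t) * (m.choose t : ℚ) := by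
        intro t ht
        rw [Finset.mem_range] at ht
        have h1 : i - (j + t) = m - t := by omega
        have h2 : (j + t) - j = t := by omega
        have h3 : j - j = 0 := by omega
        rw [h1, h2, h3, pow_zero, mul_one]
        have hfac : (m.choose t) * t.factorial * (m - t).factorial = m.factorial :=
          Nat.choose_mul_factorial_mul_factorial (by omega)
        have ht0 : (t.factorial : ℚ) ≠ 0 := Nat.cast_ne_zero.mpr t.factorial_ne_zero
        have hmt0 : ((m - t).factorial : ℚ) ≠ 0 := Nat.cast_ne_zero.mpr (m - t).factorial_ne_zero
        field_simp
        rw [← hfac]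
        push_cast
        ring
      rw [Finset.sum_congr rfl hterm]
      have hrefl : ∑ t ∈ Finset.range (m + 1), (-1 : ℚ) ^ (m - t) * (m.choose t : ℚ)
          = ∑ t ∈ Finset.range (m + 1), (-1 : ℚ) ^ t * (m.choose t : ℚ) := by
        rw [← Finset.sum_range_reflect]
        apply Finset.sum_congr rfl
        intro t ht
        rw [Finset.mem_range] at ht
        have h1 : m - (m + 1 - 1 - t) = t := by omega
        have h2 : m + 1 - 1 - t = m - t := by omega
        rw [h1, h2, Nat.choose_symm (by omega : t ≤ m)]
      rw [hrefl]
      exact_mod_cast Int.alternating_sum_range_choose (n := m)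
    have hfac0 : (m.factorial : ℚ) ≠ 0 := Nat.cast_ne_zero.mpr m.factorial_ne_zero
    have : gq j i j = (if m = 0 then 1 else 0) / (m.factorial : ℚ) := by
      rw [← hkey]
      field_simp
    rw [this]
    by_cases hm0 : m = 0
    · rw [if_pos hm0, if_pos (by omega), hm0]
      simp
    · rw [if_neg hm0, if_neg (by omega)]
      simp

lemma gq_succ {n i j : ℕ} (hi : 1 ≤ i) (hjn : j ≤ n) :
    gq (n+1) i j = i * gq n i j + gq n (i-1) j := by
  rcases Nat.lt_or_ge i j with hij | hij
  · rw [gq_zero_of_lt hij, gq_zero_of_lt hij, gq_zero_of_lt (by omega)]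
    ring
  · -- j ≤ i
    obtain ⟨i', rfl⟩ : ∃ i', i = i' + 1 := ⟨i - 1, by omega⟩
    simp only [Nat.add_sub_cancel]
    have hstep : ∀ ℓ ∈ Finset.Icc j (i' + 1),
        (-1 : ℚ) ^ (i' + 1 - ℓ) * (ℓ : ℚ) ^ (n + 1 - j)
          / (((ℓ - j).factorial : ℚ) * ((i' + 1 - ℓ).factorial : ℚ))
        = ((i' + 1 : ℕ) : ℚ) * ((-1 : ℚ) ^ (i' + 1 - ℓ) * (ℓ : ℚ) ^ (n - j)
            / (((ℓ - j).factorial : ℚ) * ((i' + 1 - ℓ).factorial : ℚ)))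
          - ((i' + 1 - ℓ : ℕ) : ℚ) * ((-1 : ℚ) ^ (i' + 1 - ℓ) * (ℓ : ℚ) ^ (n - j)
            / (((ℓ - j).factorial : ℚ) * ((i' + 1 - ℓ).factorial : ℚ))) := by
      intro ℓ hℓ
      rw [Finset.mem_Icc] at hℓ
      have hpow : n + 1 - j = (n - j) + 1 := by omega
      have hcast : ((i' + 1 - ℓ : ℕ) : ℚ) = ((i' + 1 : ℕ) : ℚ) - (ℓ : ℚ) := by
        push_cast [Nat.cast_sub hℓ.2]
        ring
      rw [hpow, pow_succ, hcast]
      ring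
    have hS2 : (∑ ℓ ∈ Finset.Icc j (i' + 1), ((i' + 1 - ℓ : ℕ) : ℚ) *
          ((-1 : ℚ) ^ (i' + 1 - ℓ) * (ℓ : ℚ) ^ (n - j)
            / (((ℓ - j).factorial : ℚ) * ((i' + 1 - ℓ).factorial : ℚ))))
        = - ∑ ℓ ∈ Finset.Icc j i', (-1 : ℚ) ^ (i' - ℓ) * (ℓ : ℚ) ^ (n - j)
            / (((ℓ - j).factorial : ℚ) * ((i' - ℓ).factorial : ℚ)) := by
      rw [Finset.sum_Icc_succ_top (by omega : j ≤ i' + 1)]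
      rw [show i' + 1 - (i' + 1) = 0 from by omega]
      norm_num
      rw [← Finset.sum_neg_distrib]
      apply Finset.sum_congr rfl
      intro ℓ hℓ
      rw [Finset.mem_Icc] at hℓ
      have h1 : i' + 1 - ℓ = (i' - ℓ) + 1 := by omega
      rw [h1, pow_succ, Nat.factorial_succ]
      have hne1 : ((i' - ℓ).factorial : ℚ) ≠ 0 := Nat.cast_ne_zero.mpr (Nat.factorial_ne_zero _)
      have hne2 : ((ℓ - j).factorial : ℚ) ≠ 0 := Nat.cast_ne_zero.mpr (Nat.factorial_ne_zero _)
      push_cast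
      field_simp
    unfold gq
    rw [Finset.sum_congr rfl hstep, Finset.sum_sub_distrib, ← Finset.mul_sum, hS2]
    push_cast
    ring

lemma Pc_eq_gq : ∀ n j, 1 ≤ j → j ≤ n → ∀ i, (Pc n i j : ℚ) = gq n i j := by
  intro n j hj hjn
  induction n, hjn using Nat.le_induction with
  | base =>
    intro i
    rw [Pc_base hj, gq_base]
    split <;> simp
  | succ n hjn ih =>
    intro i
    rcases Nat.eq_zero_or_pos i with rfl | hi
    · rw [Pc_zero_of_lt hj (by omega) (by omega), gq_zero_of_lt (by omega)]
      simp
    · rw [Pc_succ hi hjn, gq_succ hi hjn]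
      push_cast
      rw [ih i, ih (i-1)]

lemma fixCount_eq {n : ℕ} {π : Fin n → ℕ} (h : IsRGS π) :
    fixCount π = ((Finset.Icc 1 n).filter (fun j => RGSpre j π)).card := by
  unfold fixCount
  apply Finset.card_bij (fun (i : Fin n) (_ : i ∈ Finset.univ.filter
    (fun i : Fin n => π i = (i : ℕ) + 1)) => (i : ℕ) + 1)
  · intro i hi
    rw [Finset.mem_filter] at hi
    refine Finset.mem_filter.mpr ⟨Finset.mem_Icc.mpr ⟨by omega, by have := i.isLt; omega⟩, ?_⟩
    intro m hm
    exact isRGS_fix_prefix h i hi.2 m (by omega)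
  · intro a _ b _ hab
    exact Fin.ext (by omega)
  · intro s hs
    rw [Finset.mem_filter, Finset.mem_Icc] at hs
    refine ⟨⟨s - 1, by omega⟩, Finset.mem_filter.mpr ⟨mem_univ _, ?_⟩, by
      show s - 1 + 1 = s; omega⟩
    exact hs.2 ⟨s - 1, by omega⟩ (by show s - 1 < s; omega)

/-- For `n ≥ 1`, the total number of fixed points over all RGS of length `n`
equals `Σ_{i=1}^{n} Σ_{j=1}^{i} Σ_{ℓ=j}^{i} (-1)^{i-ℓ} ℓ^{n-j} / ((ℓ-j)! (i-ℓ)!)`. -/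
theorem rgs_total_fixed_points_formula (n : ℕ) (hn : 1 ≤ n) :
    (∑ π ∈ RGS n, (fixCount π : ℚ))
      = ∑ i ∈ Finset.Icc 1 n, ∑ j ∈ Finset.Icc 1 i, ∑ ℓ ∈ Finset.Icc j i,
          (-1 : ℚ) ^ (i - ℓ) * (ℓ : ℚ) ^ (n - j)
            / (((ℓ - j).factorial : ℚ) * ((i - ℓ).factorial : ℚ)) := by
  classical
  have step1 : (∑ π ∈ RGS n, (fixCount π : ℚ))
      = ∑ π ∈ RGS n, ∑ j ∈ Finset.Icc 1 n, (if RGSpre j π then (1 : ℚ) else 0) := by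
    apply Finset.sum_congr rfl
    intro π hπ
    rw [fixCount_eq (mem_RGS_iff.mp hπ)]
    rw [Finset.card_filter]
    push_cast
    rfl
  rw [step1, Finset.sum_comm]
  have step2 : ∀ j ∈ Finset.Icc 1 n,
      (∑ π ∈ RGS n, (if RGSpre j π then (1 : ℚ) else 0))
      = ∑ i ∈ Finset.Icc 1 n, (Pc n i j : ℚ) := by
    intro j hj
    rw [Finset.mem_Icc] at hj
    rw [Finset.sum_boole]
    have hcard : ((RGS n).filter (fun π => RGSpre j π)).card
        = ∑ i ∈ Finset.Icc 1 n, Pc n i j := by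
      rw [Finset.card_eq_sum_card_fiberwise
        (f := fun π : Fin n → ℕ => Finset.univ.sup π) (t := Finset.Icc 1 n) ?_]
      · apply Finset.sum_congr rfl
        intro i _
        unfold Pc RGSk
        congr 1
        rw [Finset.filter_filter, Finset.filter_filter]
        apply Finset.filter_congr
        intro π _
        tauto
      · intro π hπ
        rw [Finset.mem_coe, Finset.mem_filter] at hπ
        have hr := mem_RGS_iff.mp hπ.1
        rw [Finset.mem_coe, Finset.mem_Icc]
        constructor
        · set x0 : Fin n := ⟨0, by omega⟩ with hx0
          have h2 := Finset.le_sup (f := π) (mem_univ x0)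
          have h1 := (hr x0).1
          exact le_trans h1 h2
        · exact isRGS_sup_le hr
    rw [hcard]
    push_cast
    rfl
  rw [Finset.sum_congr rfl step2]
  have step3 : ∀ j ∈ Finset.Icc 1 n, ∀ i ∈ Finset.Icc 1 n,
      (Pc n i j : ℚ) = gq n i j := by
    intro j hj i _
    rw [Finset.mem_Icc] at hj
    exact Pc_eq_gq n j hj.1 hj.2 i
  rw [Finset.sum_congr rfl (fun j hj => Finset.sum_congr rfl (step3 j hj))]
  rw [Finset.sum_comm]
  apply Finset.sum_congr rfl
  intro i hi
  rw [Finset.mem_Icc] at hi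
  have hsub : Finset.Icc 1 i ⊆ Finset.Icc 1 n := Finset.Icc_subset_Icc_right hi.2
  rw [← Finset.sum_subset hsub]
  · exact Finset.sum_congr rfl (fun j _ => rfl)
  · intro j hj hj'
    rw [Finset.mem_Icc] at hj hj'
    exact gq_zero_of_lt (by omega)
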